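/- Let F, G : ℝ⁴ → ℝ be smooth functions of (w, z, x, y), and let Q = ∂_w∂_x + ∂_z∂_y − F_y∂_x² − G_x∂_y² + (F_x + G_y)∂_x∂_y. Consider ℝ⁵ with coordinates (w, z, x, y, λ) and the vector fields X₁ = ∂_w − F_y∂_x + (G_y + λ)∂_y + Q(F)∂_λ and X₂ = ∂_z + (F_x − λ)∂_x − G_x∂_y − Q(G)∂_λ. Then X₁ and X₂ commute identically on ℝ⁵ if and only if (F, G) satisfies the system (sd_3rd): ∂_x(Q(F)) − ∂_y(Q(G)) = 0 and (∂_w − F_y∂_x + G_y∂_y)Q(G) + (∂_z + F_x∂_x − G_x∂_y)Q(F) = 0. -/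

import Mathlib

noncomputable section

/-- Partial derivative of `f` along the `i`-th coordinate direction on `ℝⁿ`.
Coordinates on `ℝ⁴` are `(w, z, x, y) = (0, 1, 2, 3)`; on `ℝ⁵` they are
`(w, z, x, y, λ) = (0, 1, 2, 3, 4)`. -/
def pd {n : ℕ} (i : Fin n) (f : (Fin n → ℝ) → ℝ) : (Fin n → ℝ) → ℝ :=
  fun x => fderiv ℝ f x (Pi.single i 1)

/-- Lie bracket of vector fields on `ℝⁿ`:
`[X,Y](p) = (DY)(p)(X(p)) − (DX)(p)(Y(p))`. -/
def lieBr {n : ℕ} (X Y : (Fin n → ℝ) → (Fin n → ℝ)) :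
    (Fin n → ℝ) → (Fin n → ℝ) :=
  fun p => fderiv ℝ Y p (X p) - fderiv ℝ X p (Y p)

/-- Projection `(w, z, x, y, λ) ↦ (w, z, x, y)`. -/
def π4 (s : Fin 5 → ℝ) : Fin 4 → ℝ := ![s 0, s 1, s 2, s 3]

/-- The operator `Q = ∂_w∂_x + ∂_z∂_y − F_y∂_x² − G_x∂_y² + (F_x + G_y)∂_x∂_y`
applied to `h`. -/
def Qop (F G h : (Fin 4 → ℝ) → ℝ) : (Fin 4 → ℝ) → ℝ :=
  fun x =>
    pd 0 (pd 2 h) x + pd 1 (pd 3 h) x - pd 3 F x * pd 2 (pd 2 h) x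
      - pd 2 G x * pd 3 (pd 3 h) x + (pd 2 F x + pd 3 G x) * pd 2 (pd 3 h) x

/-- First equation of system (sd_3rd): `∂_x(Q(F)) − ∂_y(Q(G)) = 0`. -/
def sd3rd1 (F G : (Fin 4 → ℝ) → ℝ) : Prop :=
  ∀ x : Fin 4 → ℝ, pd 2 (Qop F G F) x - pd 3 (Qop F G G) x = 0

/-- Second equation of system (sd_3rd):
`(∂_w − F_y∂_x + G_y∂_y)Q(G) + (∂_z + F_x∂_x − G_x∂_y)Q(F) = 0`. -/
def sd3rd2 (F G : (Fin 4 → ℝ) → ℝ) : Prop :=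
  ∀ x : Fin 4 → ℝ,
    (pd 0 (Qop F G G) x - pd 3 F x * pd 2 (Qop F G G) x
        + pd 3 G x * pd 3 (Qop F G G) x)
      + (pd 1 (Qop F G F) x + pd 2 F x * pd 2 (Qop F G F) x
        - pd 2 G x * pd 3 (Qop F G F) x) = 0

/-- `X₁ = ∂_w − F_y∂_x + (G_y + λ)∂_y + Q(F)∂_λ`. -/
def asdLax1 (F G : (Fin 4 → ℝ) → ℝ) : (Fin 5 → ℝ) → (Fin 5 → ℝ) :=
  fun s => ![1, 0, -(pd 3 F (π4 s)), pd 3 G (π4 s) + s 4, Qop F G F (π4 s)]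

/-- `X₂ = ∂_z + (F_x − λ)∂_x − G_x∂_y − Q(G)∂_λ`. -/
def asdLax2 (F G : (Fin 4 → ℝ) → ℝ) : (Fin 5 → ℝ) → (Fin 5 → ℝ) :=
  fun s => ![0, 1, pd 2 F (π4 s) - s 4, -(pd 2 G (π4 s)), -(Qop F G G (π4 s))]

/-! The bracket is computed componentwise. Its `∂_w`, `∂_z` components vanish because those
coefficients are constant. In the `∂_x`, `∂_y` components the `λ`-terms cancel and, after
`F_xy = F_yx` (resp. `G_xy = G_yx`), the second-order terms reassemble into `Q(F)` (resp. `Q(G)`),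
which cancels against `X₁(−λ) = −Q(F)` (resp. `−X₂(λ) = Q(G)`). The `∂_λ` component is affine in
`λ`, with slope the left side of the first equation of (sd_3rd) and constant term minus the left
side of the second, so it vanishes for every `λ` iff both equations hold. -/

theorem forall_mul_sub_eq_zero_iff {R : Type*} [Ring R] {a b : R} :
    (∀ t : R, t * a - b = 0) ↔ a = 0 ∧ b = 0 := by
  refine ⟨fun h => ?_, fun ⟨ha, hb⟩ t => by simp [ha, hb]⟩
  have hb : b = 0 := by simpa using h 0
  exact ⟨by simpa [hb] using h 1, hb⟩

section PartialDerivatives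

variable {n : ℕ} {f : (Fin n → ℝ) → ℝ}

@[fun_prop]
theorem contDiff_pd (i : Fin n) (hf : ContDiff ℝ (⊤ : ℕ∞) f) : ContDiff ℝ (⊤ : ℕ∞) (pd i f) :=
  (hf.fderiv_right (by simp)).clm_apply contDiff_const

@[fun_prop]
theorem differentiable_pd (i : Fin n) (hf : ContDiff ℝ (⊤ : ℕ∞) f) : Differentiable ℝ (pd i f) :=
  (contDiff_pd i hf).differentiable (by simp)

theorem pd_comm (hf : ContDiff ℝ 2 f) (i j : Fin n) : pd i (pd j f) = pd j (pd i f) := by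
  have hdiff : Differentiable ℝ (fderiv ℝ f) :=
    (hf.fderiv_right (m := 1) le_rfl).differentiable one_ne_zero
  have hpd (k l : Fin n) (x : Fin n → ℝ) :
      pd k (pd l f) x = fderiv ℝ (fderiv ℝ f) x (Pi.single k 1) (Pi.single l 1) := by
    change fderiv ℝ (fun y => fderiv ℝ f y (Pi.single l 1)) x (Pi.single k 1) = _
    simp [fderiv_clm_apply (hdiff x) (differentiableAt_const _)]
  funext x
  rw [hpd, hpd, (hf.contDiffAt.isSymmSndFDerivAt (by simp)).eq]

theorem fderiv_apply_eq_sum_pd (x v : Fin n → ℝ) : fderiv ℝ f x v = ∑ i, v i * pd i f x := by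
  conv_lhs => rw [← Finset.univ_sum_single v, map_sum]
  refine Finset.sum_congr rfl fun i _ => ?_
  rw [show Pi.single i (v i) = v i • Pi.single i (1 : ℝ) by simp [← Pi.single_smul],
    map_smul, smul_eq_mul, pd]

theorem lieBr_apply {X Y : (Fin n → ℝ) → Fin n → ℝ} {p : Fin n → ℝ}
    (hX : DifferentiableAt ℝ X p) (hY : DifferentiableAt ℝ Y p) (i : Fin n) :
    lieBr X Y p i = fderiv ℝ (fun q => Y q i) p (X p) - fderiv ℝ (fun q => X q i) p (Y p) := by
  rw [fderiv_apply hX, fderiv_apply hY]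
  rfl

end PartialDerivatives

section Lift

def π4CLM : (Fin 5 → ℝ) →L[ℝ] (Fin 4 → ℝ) :=
  ContinuousLinearMap.pi fun i => ContinuousLinearMap.proj i.castSucc

theorem coe_π4CLM : ⇑π4CLM = π4 :=
  funext fun s => funext fun i => by fin_cases i <;> rfl

@[fun_prop]
theorem differentiable_π4 : Differentiable ℝ π4 :=
  coe_π4CLM ▸ π4CLM.differentiable

variable {h : (Fin 4 → ℝ) → ℝ} {s : Fin 5 → ℝ}

theorem fderiv_comp_π4_apply (hh : DifferentiableAt ℝ h (π4 s)) (v : Fin 5 → ℝ) :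
    fderiv ℝ (fun t => h (π4 t)) s v = fderiv ℝ h (π4 s) (π4 v) := by
  rw [← coe_π4CLM, fderiv_fun_comp s (coe_π4CLM ▸ hh) π4CLM.differentiableAt, π4CLM.fderiv]
  rfl

theorem fderiv_eval_four_apply (v : Fin 5 → ℝ) : fderiv ℝ (fun t : Fin 5 → ℝ => t 4) s v = v 4 := by
  rw [fderiv_apply differentiableAt_fun_id, fderiv_fun_id]
  rfl

theorem forall_π4_iff {P : (Fin 4 → ℝ) → ℝ → Prop} :
    (∀ s : Fin 5 → ℝ, P (π4 s) (s 4)) ↔ ∀ x t, P x t := by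
  refine ⟨fun h x t => ?_, fun h s => h _ _⟩
  have hx : π4 ![x 0, x 1, x 2, x 3, t] = x := funext fun i => by fin_cases i <;> rfl
  exact hx ▸ h ![x 0, x 1, x 2, x 3, t]

variable {F G : (Fin 4 → ℝ) → ℝ}

theorem fderiv_comp_π4_asdLax1 (hh : DifferentiableAt ℝ h (π4 s)) :
    fderiv ℝ (fun t => h (π4 t)) s (asdLax1 F G s) =
      pd 0 h (π4 s) - pd 3 F (π4 s) * pd 2 h (π4 s) + (pd 3 G (π4 s) + s 4) * pd 3 h (π4 s) := by
  rw [fderiv_comp_π4_apply hh, fderiv_apply_eq_sum_pd, Fin.sum_univ_four]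
  simp [π4, asdLax1]
  ring

theorem fderiv_comp_π4_asdLax2 (hh : DifferentiableAt ℝ h (π4 s)) :
    fderiv ℝ (fun t => h (π4 t)) s (asdLax2 F G s) =
      pd 1 h (π4 s) + (pd 2 F (π4 s) - s 4) * pd 2 h (π4 s) - pd 2 G (π4 s) * pd 3 h (π4 s) := by
  rw [fderiv_comp_π4_apply hh, fderiv_apply_eq_sum_pd, Fin.sum_univ_four]
  simp [π4, asdLax2]
  ring

end Lift

section Lax

variable {F G : (Fin 4 → ℝ) → ℝ}

theorem asdLax1_apply_four (s : Fin 5 → ℝ) : asdLax1 F G s 4 = Qop F G F (π4 s) := rfl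

theorem asdLax2_apply_four (s : Fin 5 → ℝ) : asdLax2 F G s 4 = -Qop F G G (π4 s) := rfl

theorem contDiff_Qop {h : (Fin 4 → ℝ) → ℝ} (hF : ContDiff ℝ (⊤ : ℕ∞) F)
    (hG : ContDiff ℝ (⊤ : ℕ∞) G) (hh : ContDiff ℝ (⊤ : ℕ∞) h) :
    ContDiff ℝ (⊤ : ℕ∞) (Qop F G h) := by
  unfold Qop
  fun_prop

theorem differentiable_asdLax1 (hF : ContDiff ℝ (⊤ : ℕ∞) F) (hG : ContDiff ℝ (⊤ : ℕ∞) G) :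
    Differentiable ℝ (asdLax1 F G) := by
  have := contDiff_Qop hF hG hF
  refine differentiable_pi.2 fun i => ?_
  fin_cases i <;> simp [asdLax1] <;> fun_prop (disch := simp)

theorem differentiable_asdLax2 (hF : ContDiff ℝ (⊤ : ℕ∞) F) (hG : ContDiff ℝ (⊤ : ℕ∞) G) :
    Differentiable ℝ (asdLax2 F G) := by
  have := contDiff_Qop hF hG hG
  refine differentiable_pi.2 fun i => ?_
  fin_cases i <;> simp [asdLax2] <;> fun_prop (disch := simp)

def sd3rd1Lhs (F G : (Fin 4 → ℝ) → ℝ) (x : Fin 4 → ℝ) : ℝ :=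
  pd 2 (Qop F G F) x - pd 3 (Qop F G G) x

def sd3rd2Lhs (F G : (Fin 4 → ℝ) → ℝ) (x : Fin 4 → ℝ) : ℝ :=
  (pd 0 (Qop F G G) x - pd 3 F x * pd 2 (Qop F G G) x + pd 3 G x * pd 3 (Qop F G G) x)
    + (pd 1 (Qop F G F) x + pd 2 F x * pd 2 (Qop F G F) x - pd 2 G x * pd 3 (Qop F G F) x)

variable (hF : ContDiff ℝ (⊤ : ℕ∞) F) (hG : ContDiff ℝ (⊤ : ℕ∞) G) (s : Fin 5 → ℝ)
include hF hG

theorem lieBr_asdLax_apply_zero : lieBr (asdLax1 F G) (asdLax2 F G) s 0 = 0 := by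
  rw [lieBr_apply (differentiable_asdLax1 hF hG s) (differentiable_asdLax2 hF hG s)]
  change fderiv ℝ (fun _ => (0 : ℝ)) s _ - fderiv ℝ (fun _ => (1 : ℝ)) s _ = 0
  simp

theorem lieBr_asdLax_apply_one : lieBr (asdLax1 F G) (asdLax2 F G) s 1 = 0 := by
  rw [lieBr_apply (differentiable_asdLax1 hF hG s) (differentiable_asdLax2 hF hG s)]
  change fderiv ℝ (fun _ => (1 : ℝ)) s _ - fderiv ℝ (fun _ => (0 : ℝ)) s _ = 0
  simp

theorem lieBr_asdLax_apply_two : lieBr (asdLax1 F G) (asdLax2 F G) s 2 = 0 := by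
  rw [lieBr_apply (differentiable_asdLax1 hF hG s) (differentiable_asdLax2 hF hG s)]
  change fderiv ℝ (fun t => pd 2 F (π4 t) - t 4) s (asdLax1 F G s)
    - fderiv ℝ (fun t => -pd 3 F (π4 t)) s (asdLax2 F G s) = 0
  rw [fderiv_fun_sub (by fun_prop (disch := simp)) (by fun_prop), fderiv_fun_neg]
  simp only [sub_apply, neg_apply]
  rw [fderiv_comp_π4_asdLax1 (by fun_prop (disch := simp)),
    fderiv_comp_π4_asdLax2 (by fun_prop (disch := simp)), fderiv_eval_four_apply,
    pd_comm (hF.of_le (by norm_cast)) 3 2, asdLax1_apply_four]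
  unfold Qop
  ring

theorem lieBr_asdLax_apply_three : lieBr (asdLax1 F G) (asdLax2 F G) s 3 = 0 := by
  rw [lieBr_apply (differentiable_asdLax1 hF hG s) (differentiable_asdLax2 hF hG s)]
  change fderiv ℝ (fun t => -pd 2 G (π4 t)) s (asdLax1 F G s)
    - fderiv ℝ (fun t => pd 3 G (π4 t) + t 4) s (asdLax2 F G s) = 0
  rw [fderiv_fun_add (by fun_prop (disch := simp)) (by fun_prop), fderiv_fun_neg]
  simp only [add_apply, neg_apply]
  rw [fderiv_comp_π4_asdLax1 (by fun_prop (disch := simp)),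
    fderiv_comp_π4_asdLax2 (by fun_prop (disch := simp)), fderiv_eval_four_apply,
    pd_comm (hG.of_le (by norm_cast)) 3 2, asdLax2_apply_four]
  unfold Qop
  ring

theorem lieBr_asdLax_apply_four : lieBr (asdLax1 F G) (asdLax2 F G) s 4 =
    s 4 * sd3rd1Lhs F G (π4 s) - sd3rd2Lhs F G (π4 s) := by
  rw [lieBr_apply (differentiable_asdLax1 hF hG s) (differentiable_asdLax2 hF hG s)]
  change fderiv ℝ (fun t => -Qop F G G (π4 t)) s (asdLax1 F G s)
    - fderiv ℝ (fun t => Qop F G F (π4 t)) s (asdLax2 F G s) = _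
  rw [fderiv_fun_neg, neg_apply,
    fderiv_comp_π4_asdLax1 ((contDiff_Qop hF hG hG).differentiable (by simp) _),
    fderiv_comp_π4_asdLax2 ((contDiff_Qop hF hG hF).differentiable (by simp) _)]
  unfold sd3rd1Lhs sd3rd2Lhs
  ring

theorem lieBr_asdLax : lieBr (asdLax1 F G) (asdLax2 F G) s =
    ![0, 0, 0, 0, s 4 * sd3rd1Lhs F G (π4 s) - sd3rd2Lhs F G (π4 s)] := by
  funext i
  fin_cases i
  · exact lieBr_asdLax_apply_zero hF hG s
  · exact lieBr_asdLax_apply_one hF hG s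
  · exact lieBr_asdLax_apply_two hF hG s
  · exact lieBr_asdLax_apply_three hF hG s
  · exact lieBr_asdLax_apply_four hF hG s

end Lax

/-- For smooth `F, G`, the Lax fields `X₁, X₂` commute identically on `ℝ⁵` iff
`(F, G)` solves the system (sd_3rd). -/
theorem asd_lax_commute_iff_sd3rd
    (F G : (Fin 4 → ℝ) → ℝ)
    (hF : ContDiff ℝ (⊤ : ℕ∞) F)
    (hG : ContDiff ℝ (⊤ : ℕ∞) G) :
    (∀ s : Fin 5 → ℝ, lieBr (asdLax1 F G) (asdLax2 F G) s = 0) ↔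
      (sd3rd1 F G ∧ sd3rd2 F G) := by
  calc (∀ s, lieBr (asdLax1 F G) (asdLax2 F G) s = 0)
      ↔ ∀ s : Fin 5 → ℝ, s 4 * sd3rd1Lhs F G (π4 s) - sd3rd2Lhs F G (π4 s) = 0 := by
        simp [lieBr_asdLax hF hG]
    _ ↔ ∀ x t, t * sd3rd1Lhs F G x - sd3rd2Lhs F G x = 0 :=
        forall_π4_iff (P := fun x t => t * sd3rd1Lhs F G x - sd3rd2Lhs F G x = 0)
    _ ↔ sd3rd1 F G ∧ sd3rd2 F G := by
        simp only [forall_mul_sub_eq_zero_iff, forall_and]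
        rfl
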